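/- Let X and Y be Tychonoff spaces and f : X → Y. Then f is injective and open onto its range if and only if the inverse of the f-induced relation φ (where φ relates C_α(X) to C_{f*α}(Y) for each directed family α of subsets of X) is a well-defined order-preserving function. -/

import Mathlib

open Set TopologicalSpace

/-- The basic set `V(f,A,ε)` of functions uniformly `ε`-close to `f` on `A`. -/
def Vset {X : Type*} [TopologicalSpace X] (f : C(X, ℝ)) (A : Set X) (ε : ℝ) : Set C(X, ℝ) :=
  {g | ∀ x ∈ A, |f x - g x| < ε}

/-- A nonempty directed family of subsets of `X`. -/
structure DirFam (X : Type*) where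
  sets : Set (Set X)
  nonempty : sets.Nonempty
  directed : ∀ A ∈ sets, ∀ B ∈ sets, ∃ E ∈ sets, A ∪ B ⊆ E

/-- The uniform topology `C_γ` on `C(X)` determined by a directed family `γ`. -/
def DirFam.top {X : Type*} [TopologicalSpace X] (γ : DirFam X) : TopologicalSpace C(X, ℝ) where
  IsOpen U := ∀ f ∈ U, ∃ A ∈ γ.sets, ∃ ε > 0, Vset f A ε ⊆ U
  isOpen_univ := by
    intro f _
    obtain ⟨A, hA⟩ := γ.nonempty
    exact ⟨A, hA, 1, one_pos, Set.subset_univ _⟩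
  isOpen_inter := by
    intro U W hU hW f hf
    obtain ⟨A, hA, ε, hε, hAU⟩ := hU f hf.1
    obtain ⟨B, hB, δ, hδ, hBW⟩ := hW f hf.2
    obtain ⟨E, hE, hsub⟩ := γ.directed A hA B hB
    refine ⟨E, hE, min ε δ, lt_min hε hδ, fun g hg => ⟨?_, ?_⟩⟩
    · exact hAU fun x hx =>
        lt_of_lt_of_le (hg x (hsub (Set.mem_union_left _ hx))) (min_le_left _ _)
    · exact hBW fun x hx =>
        lt_of_lt_of_le (hg x (hsub (Set.mem_union_right _ hx))) (min_le_right _ _)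
  isOpen_sUnion := by
    intro S hS f hf
    obtain ⟨U, hU, hfU⟩ := hf
    obtain ⟨A, hA, ε, hε, h⟩ := hS U hU f hfU
    exact ⟨A, hA, ε, hε, h.trans (Set.subset_sUnion_of_mem hU)⟩

/-- The lattice of uniform topologies on `C(X)`. -/
def UX (X : Type*) [TopologicalSpace X] : Set (TopologicalSpace C(X, ℝ)) :=
  {t | ∃ γ : DirFam X, t = γ.top}

/-- `tle s t` means the topology `s` is coarser than or equal to `t`
(inclusion of topologies, `τ_s ⊆ τ_t`). -/
def tle {X : Type*} [TopologicalSpace X] (s t : TopologicalSpace C(X, ℝ)) : Prop :=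
  ∀ U : Set C(X, ℝ), s.IsOpen U → t.IsOpen U

/-- The directed family `{∅}`, generating the indiscrete topology `C_∅`. -/
def cEmptyFam (X : Type*) : DirFam X :=
  ⟨{∅}, Set.singleton_nonempty _, by
    intro A hA B hB
    rw [Set.mem_singleton_iff] at hA hB
    exact ⟨∅, Set.mem_singleton _, by simp [hA, hB]⟩⟩

/-- The directed family `{X}`, generating the uniform-convergence topology `C_u`. -/
def cUnivFam (X : Type*) : DirFam X :=
  ⟨{Set.univ}, Set.singleton_nonempty _, fun A _ B _ =>
    ⟨Set.univ, Set.mem_singleton _, Set.subset_univ _⟩⟩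

/-- The directed family `{{x}}`. -/
def ptFam {X : Type*} (x : X) : DirFam X :=
  ⟨{{x}}, Set.singleton_nonempty _, by
    intro A hA B hB
    rw [Set.mem_singleton_iff] at hA hB
    exact ⟨{x}, Set.mem_singleton _, by simp [hA, hB]⟩⟩

/-- The directed family `{A}`. -/
def setFam {X : Type*} (A : Set X) : DirFam X :=
  ⟨{A}, Set.singleton_nonempty _, by
    intro B hB E hE
    rw [Set.mem_singleton_iff] at hB hE
    exact ⟨A, Set.mem_singleton _, by simp [hB, hE]⟩⟩

/-- The topology `C_x`. -/
def Cpt {X : Type*} [TopologicalSpace X] (x : X) : TopologicalSpace C(X, ℝ) :=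
  (ptFam x).top

/-- The topology `C_A`. -/
def CSet {X : Type*} [TopologicalSpace X] (A : Set X) : TopologicalSpace C(X, ℝ) :=
  (setFam A).top

/-- The pushforward `f*γ = {f[A] : A ∈ γ}` of a directed family along a map. -/
def DirFam.push {X Y : Type*} (f : X → Y) (γ : DirFam X) : DirFam Y :=
  ⟨(Set.image f) '' γ.sets, γ.nonempty.image _, by
    rintro A ⟨A', hA', rfl⟩ B ⟨B', hB', rfl⟩
    obtain ⟨E, hE, h⟩ := γ.directed A' hA' B' hB'
    exact ⟨f '' E, ⟨E, hE, rfl⟩, by rw [← Set.image_union]; exact fun _ ⟨x, hx, hfx⟩ => ⟨x, h hx, hfx⟩⟩⟩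


/-- If every member of `γ` is contained in the closure of a member of `δ`, then
`C_γ ⊆ C_δ`. -/
lemma tle_of_closure {Z : Type*} [TopologicalSpace Z] (γ δ : DirFam Z)
    (h : ∀ A ∈ γ.sets, ∃ B ∈ δ.sets, A ⊆ closure B) : tle γ.top δ.top := by
  intro U hU g hg
  obtain ⟨A, hA, ε, hε, hsub⟩ := hU g hg
  obtain ⟨B, hB, hAB⟩ := h A hA
  refine ⟨B, hB, ε / 2, by linarith, fun k hk => hsub fun x hx => ?_⟩
  have hcl : ∀ y ∈ closure B, |g y - k y| ≤ ε / 2 := by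
    intro y hy
    have hclosed : IsClosed {z : Z | |g z - k z| ≤ ε / 2} :=
      isClosed_le (by continuity) continuous_const
    exact hclosed.closure_subset_iff.2 (fun z hz => le_of_lt (hk z hz)) hy
  calc |g x - k x| ≤ ε / 2 := hcl x (hAB hx)
    _ < ε := by linarith

/-- In a completely regular space, `C_γ ⊆ C_δ` forces every member of `γ` to be contained
in the closure of some member of `δ`. -/
lemma closure_of_tle {Z : Type*} [TopologicalSpace Z] [CompletelyRegularSpace Z]
    (γ δ : DirFam Z) (h : tle γ.top δ.top) :
    ∀ A ∈ γ.sets, ∃ B ∈ δ.sets, A ⊆ closure B := by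
  intro A hA
  set W : Set C(Z, ℝ) := {g | ∃ t < (1 : ℝ), ∀ x ∈ A, |g x| ≤ t} with hW
  have hWopen : γ.top.IsOpen W := by
    intro g hg
    obtain ⟨t, ht, hgt⟩ := hg
    refine ⟨A, hA, (1 - t) / 2, by linarith, fun k hk => ⟨(1 + t) / 2, by linarith,
      fun x hx => ?_⟩⟩
    have h1 := hgt x hx
    have h2 := hk x hx
    have : |k x| ≤ |g x| + |g x - k x| := by
      have := abs_sub_abs_le_abs_sub (k x) (g x)
      rw [abs_sub_comm] at this
      linarith [abs_nonneg (g x - k x)]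
    linarith
  have h0W : (0 : C(Z, ℝ)) ∈ W := ⟨0, one_pos, fun x _ => by simp⟩
  obtain ⟨B, hB, ε, hε, hsub⟩ := h W hWopen 0 h0W
  refine ⟨B, hB, fun x hx => ?_⟩
  by_contra hxB
  obtain ⟨u, hu, hux, huB⟩ := CompletelyRegularSpace.completely_regular x (closure B)
    isClosed_closure hxB
  set k : C(Z, ℝ) := ⟨fun z => 1 - (u z : ℝ), by
    have : Continuous fun z => (u z : ℝ) := continuous_subtype_val.comp hu
    continuity⟩ with hk
  have hkW : k ∈ W := hsub fun z hz => by
    have : u z = 1 := huB (subset_closure hz)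
    simp [hk, this, hε]
  obtain ⟨t, ht, hkt⟩ := hkW
  have hk1 : k x = 1 := by simp [hk, hux]
  have h2 := hkt x hx
  rw [hk1] at h2
  norm_num at h2
  linarith

/-- `f : X → Y` is injective and open onto its range iff the inverse of the
`f`-induced relation is a well-defined order-preserving function. -/
theorem stmt8 {X Y : Type*} [TopologicalSpace X] [T2Space X] [CompletelyRegularSpace X]
    [TopologicalSpace Y] [T2Space Y] [CompletelyRegularSpace Y] (f : X → Y) :
    (Function.Injective f ∧ ∀ U : Set X, IsOpen U →
        IsOpen (Subtype.val ⁻¹' (f '' U) : Set (Set.range f))) ↔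
      ((∀ α β : DirFam X, (α.push f).top = (β.push f).top → α.top = β.top) ∧
        ∀ α β : DirFam X, tle (α.push f).top (β.push f).top → tle α.top β.top) := by
  constructor
  · rintro ⟨hinj, hopen⟩
    -- key: closure transfer
    have key : ∀ α β : DirFam X, tle (α.push f).top (β.push f).top → tle α.top β.top := by
      intro α β htle
      apply tle_of_closure
      intro A hA
      have h1 := closure_of_tle (α.push f) (β.push f) htle (f '' A) ⟨A, hA, rfl⟩
      obtain ⟨T, ⟨B, hB, rfl⟩, hAT⟩ := h1
      refine ⟨B, hB, fun x hx => ?_⟩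
      rw [mem_closure_iff]
      intro U hU hxU
      -- f '' U is open in range f
      have hfU : IsOpen (Subtype.val ⁻¹' (f '' U) : Set (Set.range f)) := hopen U hU
      obtain ⟨V, hV, hVeq⟩ := isOpen_induced_iff.1 hfU
      have hfxV : f x ∈ V := by
        have : (⟨f x, mem_range_self x⟩ : Set.range f) ∈ Subtype.val ⁻¹' (f '' U) := by
          exact ⟨x, hxU, rfl⟩
        rw [← hVeq] at this
        exact this
      have hfxcl : f x ∈ closure (f '' B) := hAT ⟨x, hx, rfl⟩
      obtain ⟨y, hyV, b, hb, rfl⟩ := mem_closure_iff.1 hfxcl V hV hfxV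
      -- f b ∈ V, and f b ∈ range f, so f b ∈ f '' U
      have : (⟨f b, mem_range_self b⟩ : Set.range f) ∈ Subtype.val ⁻¹' (f '' U) := by
        rw [← hVeq]; exact hyV
      obtain ⟨u, hu, hub⟩ := this
      have : u = b := hinj hub
      exact ⟨b, this ▸ hu, hb⟩
    refine ⟨fun α β heq => ?_, key⟩
    have h1 : tle α.top β.top := key α β (fun U hU => heq ▸ hU)
    have h2 : tle β.top α.top := key β α (fun U hU => heq ▸ hU)
    exact TopologicalSpace.ext_iff.2 fun s => ⟨h1 s, h2 s⟩
  · rintro ⟨-, htle⟩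
    -- derive the set-level statement
    have star : ∀ A B : Set X, f '' A ⊆ closure (f '' B) → A ⊆ closure B := by
      intro A B hcl
      have h1 : tle ((setFam A).push f).top ((setFam B).push f).top := by
        apply tle_of_closure
        rintro S ⟨A', hA', rfl⟩
        obtain rfl : A' = A := hA'
        exact ⟨f '' B, ⟨B, rfl, rfl⟩, hcl⟩
      have h2 := htle _ _ h1
      have h3 := closure_of_tle (setFam A) (setFam B) h2 A rfl
      obtain ⟨B', hB', hsub⟩ := h3
      obtain rfl : B' = B := hB'
      exact hsub
    have hinj : Function.Injective f := by
      intro x y hxy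
      have : x ∈ closure {y} := star {x} {y} (by simp [hxy]) rfl
      rwa [closure_singleton, Set.mem_singleton_iff] at this
    refine ⟨hinj, fun U hU => ?_⟩
    have hset : (Subtype.val ⁻¹' (f '' U) : Set (Set.range f)) =
        (Subtype.val ⁻¹' (closure (f '' Uᶜ)))ᶜ := by
      ext ⟨y, hy⟩
      obtain ⟨z, rfl⟩ := hy
      simp only [Set.mem_preimage, Set.mem_compl_iff]
      constructor
      · rintro ⟨u, hu, huz⟩ hmem
        have hzU : z ∈ U := hinj huz ▸ hu
        have : z ∈ closure Uᶜ := star {z} Uᶜ (by simpa using hmem) rfl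
        rw [hU.isClosed_compl.closure_eq] at this
        exact this hzU
      · intro hnot
        by_cases hzU : z ∈ U
        · exact ⟨z, hzU, rfl⟩
        · exact absurd (subset_closure (show f z ∈ f '' Uᶜ from ⟨z, hzU, rfl⟩)) hnot
    rw [hset]
    exact (isClosed_closure.preimage continuous_subtype_val).isOpen_compl
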